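/- Let p ≥ 1, d ≥ 1, K ≥ 2, and let μ_2, …, μ_K be probability measures on ℝ^d with finite p-th moments. For a probability measure μ_1 on ℝ^d with finite p-th moment, set g_{μ_1}(θ) := max_{2≤k≤K} W_p^p(θ♯μ_1, θ♯μ_k), assumed measurable with g_{μ_1}, g_{μ_1}·exp(g_{μ_1}) and θ ↦ exp(g_{μ_1}(θ))·[inf_{π ∈ Π(μ_1,…,μ_K)} ∫ (max_{i,j}|⟨θ,x_i⟩−⟨θ,x_j⟩|)^p dπ] σ-integrable on S^{d−1}. Then, taking the infimum over all such μ_1, inf_{μ_1} ESF(μ_1; μ_{2:K}) ≤ inf_{μ_1} ESMW_p^p(μ_1, μ_2, …, μ_K; c): the optimal value of the es-MFSWB objective is a lower bound for the optimal value of the energy-based sliced multi-marginal Wasserstein cost with the maximal ground metric, minimized over the first marginal. -/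

import Mathlib

/-!
For every direction `θ`, projecting a multi-marginal coupling of `μ₁, μ_2, …, μ_K` onto
the coordinates `1` and `k` gives a coupling of `θ♯μ₁` and `θ♯μ_k` whose cost
`|t₁ - t_k|^p` is dominated by `c(t₁, …, t_K)^p`. Hence `g_{μ₁}(θ)` is at most the
multi-marginal cost along `θ`, and integrating against the common weight `exp(g_{μ₁})`
compares the two objectives for every admissible `μ₁`, so also their infima.
-/

open MeasureTheory Metric Real

noncomputable section

/-- `ℝ^d`. -/
abbrev Rd (d : ℕ) := EuclideanSpace ℝ (Fin d)

/-- The uniform probability measure `σ` on the unit sphere `S^{d-1} ⊂ ℝ^d`,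
obtained by normalizing the surface measure coming from the Lebesgue measure. -/
noncomputable def uniformSphere (d : ℕ) :
    Measure (sphere (0 : Rd d) 1) :=
  ((volume : Measure (Rd d)).toSphere Set.univ)⁻¹ • (volume : Measure (Rd d)).toSphere

/-- A measure on `ℝ^d` has finite `p`-th moment. -/
def FiniteMoment {d : ℕ} (p : ℝ) (μ : Measure (Rd d)) : Prop :=
  Integrable (fun x => ‖x‖ ^ p) μ

/-- A measure on `ℝ` has finite `p`-th moment. -/
def FiniteMoment1 (p : ℝ) (ν : Measure ℝ) : Prop :=
  Integrable (fun x => |x| ^ p) ν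

/-- Pushforward `θ♯μ` of `μ` under `x ↦ ⟪θ, x⟫`. -/
def proj {d : ℕ} (θ : sphere (0 : Rd d) 1) (μ : Measure (Rd d)) : Measure ℝ :=
  μ.map (fun x => inner ℝ (θ : Rd d) x)

/-- The set of couplings of two measures on `ℝ`. -/
def Coupling (ν₁ ν₂ : Measure ℝ) : Set (Measure (ℝ × ℝ)) :=
  {γ | IsProbabilityMeasure γ ∧ γ.map Prod.fst = ν₁ ∧ γ.map Prod.snd = ν₂}

/-- One-dimensional `p`-Wasserstein cost `W_p^p`. -/
def Wpp (p : ℝ) (ν₁ ν₂ : Measure ℝ) : ℝ :=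
  sInf ((fun γ : Measure (ℝ × ℝ) => ∫ q, |q.1 - q.2| ^ p ∂γ) '' Coupling ν₁ ν₂)

/-- Sliced `p`-Wasserstein cost `SW_p^p`. -/
def SWpp {d : ℕ} (p : ℝ) (μ₁ μ₂ : Measure (Rd d)) : ℝ :=
  ∫ θ, Wpp p (proj θ μ₁) (proj θ μ₂) ∂(uniformSphere d)

/-- The set of multi-marginal couplings of `K` measures on `ℝ^d`. -/
def MCoupling {d K : ℕ} (μs : Fin K → Measure (Rd d)) : Set (Measure (Fin K → Rd d)) :=
  {pl | IsProbabilityMeasure pl ∧ ∀ k, pl.map (fun x => x k) = μs k}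

/-- The inner multi-marginal transport cost along direction `θ`, with the maximal
ground metric `c(t₁,…,t_K) = max_{i,j} |t_i - t_j|`. -/
def SMWtheta {d K : ℕ} (p : ℝ) (μs : Fin K → Measure (Rd d))
    (θ : sphere (0 : Rd d) 1) : ℝ :=
  sInf ((fun pl : Measure (Fin K → Rd d) =>
      ∫ x, (⨆ i, ⨆ j, |inner ℝ (θ : Rd d) (x i) - inner ℝ (θ : Rd d) (x j)|) ^ p ∂pl)
    '' MCoupling μs)

/-- Sliced multi-marginal Wasserstein cost `SMW_p^p` with the maximal ground metric. -/
def SMWpp {d K : ℕ} (p : ℝ) (μs : Fin K → Measure (Rd d)) : ℝ :=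
  ∫ θ, SMWtheta p μs θ ∂(uniformSphere d)

lemma sInf_image_le_sInf_image {α β : Type*} [ConditionallyCompleteLattice β] {S : Set α}
    {f g : α → β} (hf : BddBelow (f '' S)) (hfg : ∀ a ∈ S, f a ≤ g a) :
    sInf (f '' S) ≤ sInf (g '' S) := by
  rcases S.eq_empty_or_nonempty with rfl | hS
  · simp
  refine le_csInf (hS.image g) ?_
  rintro _ ⟨a, ha, rfl⟩
  exact (csInf_le hf ⟨a, ha, rfl⟩).trans (hfg a ha)

section Slicing

variable {d K : ℕ}

/-- The maximal ground metric `c` at the projected points `⟪θ, x₁⟫, …, ⟪θ, x_K⟫`. -/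
def projSpread (θ : sphere (0 : Rd d) 1) (x : Fin K → Rd d) : ℝ :=
  ⨆ i, ⨆ j, |inner ℝ (θ : Rd d) (x i) - inner ℝ (θ : Rd d) (x j)|

lemma SMWtheta_eq_sInf_projSpread (p : ℝ) (μs : Fin K → Measure (Rd d))
    (θ : sphere (0 : Rd d) 1) :
    SMWtheta p μs θ = sInf ((fun pl => ∫ x, projSpread θ x ^ p ∂pl) '' MCoupling μs) :=
  rfl

lemma projSpread_nonneg (θ : sphere (0 : Rd d) 1) (x : Fin K → Rd d) : 0 ≤ projSpread θ x :=
  Real.iSup_nonneg fun _ => Real.iSup_nonneg fun _ => abs_nonneg _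

lemma abs_inner_sub_le_projSpread (θ : sphere (0 : Rd d) 1) (x : Fin K → Rd d) (i j : Fin K) :
    |inner ℝ (θ : Rd d) (x i) - inner ℝ (θ : Rd d) (x j)| ≤ projSpread θ x :=
  (le_ciSup (Set.finite_range _).bddAbove j).trans
    (le_ciSup (f := fun i => ⨆ j, |inner ℝ (θ : Rd d) (x i) - inner ℝ (θ : Rd d) (x j)|)
      (Set.finite_range _).bddAbove i)

lemma projSpread_le_sum (θ : sphere (0 : Rd d) 1) (x : Fin K → Rd d) :
    projSpread θ x ≤
      ∑ i, ∑ j, |inner ℝ (θ : Rd d) (x i) - inner ℝ (θ : Rd d) (x j)| := by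
  set t : Fin K → ℝ := fun i => inner ℝ (θ : Rd d) (x i)
  have hrow_nonneg (i : Fin K) : 0 ≤ ∑ j, |t i - t j| :=
    Finset.sum_nonneg fun j _ => abs_nonneg _
  have hsum_nonneg : 0 ≤ ∑ i, ∑ j, |t i - t j| := Finset.sum_nonneg fun i _ => hrow_nonneg i
  refine Real.iSup_le (fun i => Real.iSup_le (fun j => ?_) hsum_nonneg) hsum_nonneg
  exact (Finset.single_le_sum (fun j _ => abs_nonneg (t i - t j)) (Finset.mem_univ j)).trans
    (Finset.single_le_sum (fun i _ => hrow_nonneg i) (Finset.mem_univ i))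

lemma measurable_projSpread (θ : sphere (0 : Rd d) 1) :
    Measurable (projSpread (K := K) θ) :=
  Measurable.iSup fun i => Measurable.iSup fun j => by fun_prop

lemma Wpp_nonneg (p : ℝ) (ν₁ ν₂ : Measure ℝ) : 0 ≤ Wpp p ν₁ ν₂ :=
  Real.sInf_nonneg <| by
    rintro _ ⟨γ, -, rfl⟩
    exact integral_nonneg fun _ => Real.rpow_nonneg (abs_nonneg _) p

lemma Wpp_le_integral {p : ℝ} {ν₁ ν₂ : Measure ℝ} {γ : Measure (ℝ × ℝ)}
    (hγ : γ ∈ Coupling ν₁ ν₂) : Wpp p ν₁ ν₂ ≤ ∫ q, |q.1 - q.2| ^ p ∂γ :=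
  csInf_le ⟨0, by
    rintro _ ⟨γ, -, rfl⟩
    exact integral_nonneg fun _ => Real.rpow_nonneg (abs_nonneg _) p⟩ ⟨γ, hγ, rfl⟩

lemma finiteMoment_iff_memLp {p : ℝ} (hp : 0 < p) {μ : Measure (Rd d)} :
    FiniteMoment p μ ↔ MemLp id (ENNReal.ofReal p) μ := by
  rw [FiniteMoment, ← integrable_norm_rpow_iff aestronglyMeasurable_id
    (ENNReal.ofReal_pos.2 hp).ne' ENNReal.ofReal_ne_top, ENNReal.toReal_ofReal hp.le]
  rfl

lemma pi_mem_MCoupling (μs : Fin K → Measure (Rd d)) [∀ k, IsProbabilityMeasure (μs k)] :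
    Measure.pi μs ∈ MCoupling μs :=
  ⟨inferInstance, fun k => by
    simp [show (fun x : Fin K → Rd d => x k) = Function.eval k from rfl, Measure.pi_map_eval]⟩

section Coupling

variable {μs : Fin K → Measure (Rd d)} {pl : Measure (Fin K → Rd d)}

lemma map_inner_eval_mem_Coupling (hpl : pl ∈ MCoupling μs) (θ : sphere (0 : Rd d) 1)
    (i j : Fin K) :
    pl.map (fun x => (inner ℝ (θ : Rd d) (x i), inner ℝ (θ : Rd d) (x j))) ∈
      Coupling (proj θ (μs i)) (proj θ (μs j)) := by
  obtain ⟨hprob, hmarg⟩ := hpl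
  have hinner : Measurable fun y : Rd d => inner ℝ (θ : Rd d) y := by fun_prop
  refine ⟨Measure.isProbabilityMeasure_map (by fun_prop), ?_, ?_⟩
  · rw [Measure.map_map measurable_fst (by fun_prop), proj, ← hmarg i,
      Measure.map_map hinner (measurable_pi_apply i)]
    rfl
  · rw [Measure.map_map measurable_snd (by fun_prop), proj, ← hmarg j,
      Measure.map_map hinner (measurable_pi_apply j)]
    rfl

lemma memLp_inner_eval {p : ℝ} (hp : 0 < p) (hpl : pl ∈ MCoupling μs)
    (θ : sphere (0 : Rd d) 1) {i : Fin K} (hμ : FiniteMoment p (μs i)) :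
    MemLp (fun x => inner ℝ (θ : Rd d) (x i)) (ENNReal.ofReal p) pl := by
  rw [finiteMoment_iff_memLp hp, ← hpl.2 i] at hμ
  exact (innerSL ℝ (θ : Rd d)).comp_memLp' (hμ.comp_of_map (measurable_pi_apply i).aemeasurable)

lemma integrable_projSpread_rpow {p : ℝ} (hp : 0 < p) (hpl : pl ∈ MCoupling μs)
    (hμs : ∀ k, FiniteMoment p (μs k)) (θ : sphere (0 : Rd d) 1) :
    Integrable (fun x => projSpread θ x ^ p) pl := by
  have : IsProbabilityMeasure pl := hpl.1
  have hsum : MemLp (fun x => ∑ i, ∑ j,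
      |inner ℝ (θ : Rd d) (x i) - inner ℝ (θ : Rd d) (x j)|) (ENNReal.ofReal p) pl :=
    memLp_finsetSum _ fun i _ => memLp_finsetSum _ fun j _ =>
      ((memLp_inner_eval hp hpl θ (hμs i)).sub (memLp_inner_eval hp hpl θ (hμs j))).norm
  have hspread : MemLp (projSpread θ) (ENNReal.ofReal p) pl :=
    hsum.mono' (measurable_projSpread θ).aestronglyMeasurable <| .of_forall fun x => by
      rw [Real.norm_of_nonneg (projSpread_nonneg θ x)]
      exact projSpread_le_sum θ x
  simpa only [Real.norm_of_nonneg (projSpread_nonneg θ _), ENNReal.toReal_ofReal hp.le]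
    using hspread.integrable_norm_rpow'

end Coupling

/-- Any multi-marginal coupling projects to a two-marginal coupling of `θ♯μ_i` and `θ♯μ_j`
whose cost is dominated by the maximal ground metric. -/
theorem Wpp_proj_le_SMWtheta {p : ℝ} (hp : 0 < p) (μs : Fin K → Measure (Rd d))
    [∀ k, IsProbabilityMeasure (μs k)] (hμs : ∀ k, FiniteMoment p (μs k))
    (θ : sphere (0 : Rd d) 1) (i j : Fin K) :
    Wpp p (proj θ (μs i)) (proj θ (μs j)) ≤ SMWtheta p μs θ := by
  rw [SMWtheta_eq_sInf_projSpread]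
  refine le_csInf ⟨_, _, pi_mem_MCoupling μs, rfl⟩ ?_
  rintro _ ⟨pl, hpl, rfl⟩
  calc Wpp p (proj θ (μs i)) (proj θ (μs j))
      ≤ ∫ q, |q.1 - q.2| ^ p
          ∂pl.map (fun x => (inner ℝ (θ : Rd d) (x i), inner ℝ (θ : Rd d) (x j))) :=
        Wpp_le_integral (map_inner_eval_mem_Coupling hpl θ i j)
    _ = ∫ x, |inner ℝ (θ : Rd d) (x i) - inner ℝ (θ : Rd d) (x j)| ^ p ∂pl :=
        integral_map (by fun_prop)
          ((measurable_fst.sub measurable_snd).abs.pow_const p).aestronglyMeasurable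
    _ ≤ ∫ x, projSpread θ x ^ p ∂pl :=
        integral_mono_of_nonneg (.of_forall fun _ => by positivity)
          (integrable_projSpread_rpow hp hpl hμs θ) <| .of_forall fun x =>
            Real.rpow_le_rpow (abs_nonneg _) (abs_inner_sub_le_projSpread θ x i j) hp.le

lemma iSup_Wpp_proj_le_SMWtheta_cons {p : ℝ} (hp : 0 < p) (μ₁ : Measure (Rd d))
    [IsProbabilityMeasure μ₁] (hμ₁ : FiniteMoment p μ₁) (μs : Fin K → Measure (Rd d))
    [hprob : ∀ k, IsProbabilityMeasure (μs k)] (hμs : ∀ k, FiniteMoment p (μs k))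
    (θ : sphere (0 : Rd d) 1) :
    ⨆ k, Wpp p (proj θ μ₁) (proj θ (μs k)) ≤ SMWtheta p (Fin.cons μ₁ μs) θ := by
  have : ∀ i, IsProbabilityMeasure ((Fin.cons μ₁ μs : Fin (K + 1) → Measure (Rd d)) i) :=
    Fin.cases ‹_› hprob
  have hcons := Wpp_proj_le_SMWtheta hp (Fin.cons μ₁ μs) (Fin.cases hμ₁ hμs) θ 0
  exact Real.iSup_le (fun k => hcons k.succ) ((Wpp_nonneg p _ _).trans (hcons 0))

end Slicing

theorem esf_inf_le_esmw_inf_general (p : ℝ) (hp : 1 ≤ p) (d : ℕ)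
    (K : ℕ) (μs : Fin K → Measure (Rd d))
    (hμs : ∀ k, IsProbabilityMeasure (μs k)) (hμsm : ∀ k, FiniteMoment p (μs k))
    (g : Measure (Rd d) → sphere (0 : Rd d) 1 → ℝ)
    (hg : ∀ μ₁ θ, g μ₁ θ = ⨆ k, Wpp p (proj θ μ₁) (proj θ (μs k)))
    (S : Set (Measure (Rd d)))
    (hS : S = {μ₁ | IsProbabilityMeasure μ₁ ∧ FiniteMoment p μ₁ ∧ Measurable (g μ₁) ∧
      Integrable (g μ₁) (uniformSphere d) ∧
      Integrable (fun θ => g μ₁ θ * Real.exp (g μ₁ θ)) (uniformSphere d) ∧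
      Integrable (fun θ => Real.exp (g μ₁ θ) * SMWtheta p (Fin.cons μ₁ μs) θ)
        (uniformSphere d)}) :
    sInf ((fun μ₁ =>
        (∫ θ, g μ₁ θ * Real.exp (g μ₁ θ) ∂(uniformSphere d)) /
          (∫ θ, Real.exp (g μ₁ θ) ∂(uniformSphere d))) '' S) ≤
    sInf ((fun μ₁ =>
        (∫ θ, SMWtheta p (Fin.cons μ₁ μs) θ * Real.exp (g μ₁ θ) ∂(uniformSphere d)) /
          (∫ θ, Real.exp (g μ₁ θ) ∂(uniformSphere d))) '' S) := by
  have hp0 : 0 < p := by linarith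
  have hg_nonneg : ∀ μ₁ θ, 0 ≤ g μ₁ θ := fun μ₁ θ =>
    (hg μ₁ θ).symm ▸ Real.iSup_nonneg fun _ => Wpp_nonneg p _ _
  have hZ_nonneg : ∀ μ₁, 0 ≤ ∫ θ, Real.exp (g μ₁ θ) ∂(uniformSphere d) := fun _ =>
    integral_nonneg fun _ => (Real.exp_pos _).le
  refine sInf_image_le_sInf_image ⟨0, ?_⟩ fun μ₁ hμ₁ => ?_
  · rintro _ ⟨μ₁, -, rfl⟩
    exact div_nonneg (integral_nonneg fun θ => mul_nonneg (hg_nonneg μ₁ θ) (Real.exp_pos _).le)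
      (hZ_nonneg μ₁)
  rw [hS] at hμ₁
  obtain ⟨hprob, hmom, -, -, hint, hint'⟩ := hμ₁
  refine div_le_div_of_nonneg_right (integral_mono hint ?_ fun θ => ?_) (hZ_nonneg μ₁)
  · simpa only [mul_comm] using hint'
  rw [hg]
  exact mul_le_mul_of_nonneg_right
    (iSup_Wpp_proj_le_SMWtheta_cons hp0 μ₁ hmom μs hμsm θ) (Real.exp_pos _).le

/-- **Proposition 5 (es-MFSWB vs energy-based SMW).** Minimizing the es-MFSWB
objective over the barycenter is minimizing a lower bound of the energy-based
sliced multi-marginal Wasserstein cost with the maximal ground metric: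
`inf_{μ₁} ESF(μ₁; μ_{2:K+1}) ≤ inf_{μ₁} ESMW_p^p(μ₁, μ_2, …, μ_{K+1}; c)`,
where the infima range over probability measures `μ₁` with finite `p`-th moment for
which `g_{μ₁} θ = max_k W_p^p(θ♯μ₁, θ♯μ_k)` is measurable and the relevant
integrands are `σ`-integrable. Here `μs : Fin K → Measure (Rd d)` lists the
marginals `μ_2, …, μ_{K+1}` (`K ≥ 1`). -/
theorem esf_inf_le_esmw_inf (p : ℝ) (hp : 1 ≤ p) (d : ℕ) (hd : 1 ≤ d)
    (K : ℕ) (hK : 1 ≤ K) (μs : Fin K → Measure (Rd d))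
    (hμs : ∀ k, IsProbabilityMeasure (μs k)) (hμsm : ∀ k, FiniteMoment p (μs k))
    (g : Measure (Rd d) → sphere (0 : Rd d) 1 → ℝ)
    (hg : ∀ μ₁ θ, g μ₁ θ = ⨆ k, Wpp p (proj θ μ₁) (proj θ (μs k)))
    (S : Set (Measure (Rd d)))
    (hS : S = {μ₁ | IsProbabilityMeasure μ₁ ∧ FiniteMoment p μ₁ ∧ Measurable (g μ₁) ∧
      Integrable (g μ₁) (uniformSphere d) ∧
      Integrable (fun θ => g μ₁ θ * Real.exp (g μ₁ θ)) (uniformSphere d) ∧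
      Integrable (fun θ => Real.exp (g μ₁ θ) * SMWtheta p (Fin.cons μ₁ μs) θ)
        (uniformSphere d)}) :
    sInf ((fun μ₁ =>
        (∫ θ, g μ₁ θ * Real.exp (g μ₁ θ) ∂(uniformSphere d)) /
          (∫ θ, Real.exp (g μ₁ θ) ∂(uniformSphere d))) '' S) ≤
    sInf ((fun μ₁ =>
        (∫ θ, SMWtheta p (Fin.cons μ₁ μs) θ * Real.exp (g μ₁ θ) ∂(uniformSphere d)) /
          (∫ θ, Real.exp (g μ₁ θ) ∂(uniformSphere d))) '' S) :=
  esf_inf_le_esmw_inf_general p hp d K μs hμs hμsm g hg S hS
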